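/- If w ∈ ℝ⁵ is nonzero, then the function r ↦ ξ_r(w) ∈ ℝ² is a nonzero polynomial map; consequently, for any nonzero w, the set {r ∈ [0,1] : ‖ξ_r(w)‖ ≤ b} has Lebesgue measure tending to 0 as b → 0. -/

import Mathlib

/-!
The first component of `ξ_r(w)` is the value at `r` of the polynomial `∑ wᵢ Xⁱ / i!`, which is
nonzero when `w ≠ 0`; hence `r ↦ ξ_r(w)` vanishes at only finitely many points. As `b ↓ 0` the
sublevel sets `{r ∈ [0,1] : ‖ξ_r(w)‖ ≤ b}` decrease to this null set, and continuity of the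
measure from above gives the limit.
-/

open MeasureTheory

/-- The projection ξ_r : ℝ⁵ → ℝ² (Euclidean). -/
noncomputable def xi (r : ℝ) (w : Fin 5 → ℝ) : EuclideanSpace ℝ (Fin 2) :=
  WithLp.toLp 2 ![w 0 + w 1 * r + w 2 * (r ^ 2 / 2) + w 3 * (r ^ 3 / 6) + w 4 * (r ^ 4 / 24),
    w 1 + w 2 * r + w 3 * (r ^ 2 / 2) + w 4 * (r ^ 3 / 6)]

open Polynomial Filter Topology Set
open scoped Nat ENNReal

theorem tendsto_measure_sep_le_nhdsGT {α : Type*} [MeasurableSpace α] {μ : Measure α}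
    {s : Set α} {g : α → ℝ} (hs : NullMeasurableSet s μ) (hμs : μ s ≠ ∞)
    (hg : AEMeasurable g μ) (a : ℝ) :
    Tendsto (fun b => μ {x ∈ s | g x ≤ b}) (𝓝[>] a) (𝓝 (μ {x ∈ s | g x ≤ a})) := by
  have hInter : ⋂ b > a, {x ∈ s | g x ≤ b} = {x ∈ s | g x ≤ a} := by
    ext x
    simp only [mem_iInter, mem_ofPred_eq]
    exact ⟨fun h => ⟨(h (a + 1) (by linarith)).1,
        le_of_forall_gt_imp_ge_of_dense fun b hb => (h b hb).2⟩,
      fun h b hb => ⟨h.1, h.2.trans hb.le⟩⟩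
  rw [← hInter]
  exact tendsto_measure_biInter_gt
    (fun b _ => hs.inter (nullMeasurableSet_le hg aemeasurable_const))
    (fun _ _ _ hbc x hx => ⟨hx.1, hx.2.trans hbc⟩)
    ⟨a + 1, by linarith, ne_top_of_le_ne_top hμs (measure_mono fun x hx => hx.1)⟩

section TaylorPoly

variable {K : Type*} [Field K] {n : ℕ}

noncomputable def taylorPoly (w : Fin n → K) : K[X] := ∑ i, C (w i / (i : ℕ)!) * X ^ (i : ℕ)

theorem coeff_taylorPoly (w : Fin n → K) (i : Fin n) :
    (taylorPoly w).coeff i = w i / (i : ℕ)! := by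
  simp [taylorPoly, Fin.val_inj]

theorem taylorPoly_eq_zero_iff [CharZero K] {w : Fin n → K} : taylorPoly w = 0 ↔ w = 0 := by
  refine ⟨fun h => funext fun i => ?_, fun h => by simp [h, taylorPoly]⟩
  have := coeff_taylorPoly w i
  rw [h, coeff_zero, eq_comm, div_eq_zero_iff] at this
  exact this.resolve_right (mod_cast (i : ℕ).factorial_ne_zero)

end TaylorPoly

theorem xi_apply_zero (r : ℝ) (w : Fin 5 → ℝ) : xi r w 0 = (taylorPoly w).eval r := by
  simp [xi, taylorPoly, Fin.sum_univ_five, Nat.factorial]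
  ring

theorem finite_setOf_xi_eq_zero {w : Fin 5 → ℝ} (hw : w ≠ 0) : {r | xi r w = 0}.Finite :=
  (finite_setOfPred_isRoot (taylorPoly_eq_zero_iff.not.mpr hw)).subset fun r hr => by
    simpa [IsRoot, ← xi_apply_zero] using congrArg (· 0) (hr : xi r w = 0)

theorem continuous_xi (w : Fin 5 → ℝ) : Continuous fun r => xi r w := by
  unfold xi; fun_prop

/-- For nonzero w the map r ↦ ξ_r(w) is not identically zero, and the measure of
{r ∈ [0,1] : ‖ξ_r(w)‖ ≤ b} tends to 0 as b → 0⁺. -/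
theorem xi_nonzero_and_sublevel_measure (w : Fin 5 → ℝ) (hw : w ≠ 0) :
    (fun r : ℝ => xi r w) ≠ (fun _ => 0) ∧
    Filter.Tendsto (fun b : ℝ => volume {r ∈ Set.Icc (0 : ℝ) 1 | ‖xi r w‖ ≤ b})
      (nhdsWithin 0 (Set.Ioi 0)) (nhds 0) := by
  have hfin := finite_setOf_xi_eq_zero hw
  refine ⟨fun h => infinite_univ (hfin.subset fun r _ => congrFun h r), ?_⟩
  have hzero : volume {r ∈ Icc (0 : ℝ) 1 | ‖xi r w‖ ≤ 0} = 0 :=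
    hfin.measure_zero _ |> measure_mono_null fun r hr => norm_le_zero_iff.mp hr.2
  rw [← hzero]
  exact tendsto_measure_sep_le_nhdsGT measurableSet_Icc.nullMeasurableSet
    measure_Icc_lt_top.ne (continuous_xi w).norm.aemeasurable 0
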